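/- arXiv:1410.0116 — 2 statements merged into one kernel-verified Lean document; each statement's English description precedes it below -/
import Mathlib

section
/- Let A, A' ∈ ℂ^{n×n} with ‖A‖_F = ‖A'‖_F = 1, let v, v' ∈ ℂ^n be nonzero, and let λ, λ' ∈ ℂ be such that Av = λv and A_{λ,v} is invertible. Suppose that μ(A,λ,v) · dist((A,λ,v),(A',λ',v')) ≤ ε/12.5 for some 0 < ε < 0.37. Then A'_{λ',v'} is invertible and μ(A,λ,v)/(1+ε) ≤ μ(A',λ',v') ≤ (1+ε) · μ(A,λ,v). -/
noncomputable section

open Matrix Set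

/-- `T_v`: the orthogonal complement of `v` in `ℂ^n`. -/
def Tv {n : ℕ} (v : EuclideanSpace ℂ (Fin n)) : Submodule ℂ (EuclideanSpace ℂ (Fin n)) :=
  (ℂ ∙ v)ᗮ

/-- The linear map `A_{λ,v} : T_v → T_v`, `x ↦ P_{v⊥}((A - λ·Id) x)`. -/
def Alv {n : ℕ} (A : Matrix (Fin n) (Fin n) ℂ) (lam : ℂ) (v : EuclideanSpace ℂ (Fin n)) :
    Tv v →ₗ[ℂ] Tv v :=
  (Tv v).orthogonalProjectionOnto.toLinearMap ∘ₗ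
    (Matrix.toEuclideanLin A - lam • LinearMap.id) ∘ₗ (Tv v).subtype

/-- `A_{λ,v}` as a continuous linear map. -/
def AlvC {n : ℕ} (A : Matrix (Fin n) (Fin n) ℂ) (lam : ℂ) (v : EuclideanSpace ℂ (Fin n)) :
    Tv v →L[ℂ] Tv v :=
  LinearMap.toContinuousLinearMap (Alv A lam v)

/-- Frobenius norm of a complex matrix. -/
def frobNorm {n : ℕ} (A : Matrix (Fin n) (Fin n) ℂ) : ℝ :=
  Real.sqrt (∑ i, ∑ j, ‖A i j‖ ^ 2)

/-- The condition number `μ(A,λ,v) = ‖A‖_F ‖A_{λ,v}^{-1}‖`. -/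
def mu {n : ℕ} (A : Matrix (Fin n) (Fin n) ℂ) (lam : ℂ) (v : EuclideanSpace ℂ (Fin n)) : ℝ :=
  frobNorm A * ‖(AlvC A lam v).inverse‖

/-- Fubini-Study (angular) distance. -/
def dP {n : ℕ} (v w : EuclideanSpace ℂ (Fin n)) : ℝ :=
  Real.arccos (‖(inner ℂ v w : ℂ)‖ / (‖v‖ * ‖w‖))

/-- The distance on triples. -/
def distT {n : ℕ} (A : Matrix (Fin n) (Fin n) ℂ) (lam : ℂ) (v : EuclideanSpace ℂ (Fin n))
    (A' : Matrix (Fin n) (Fin n) ℂ) (lam' : ℂ) (v' : EuclideanSpace ℂ (Fin n)) : ℝ :=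
  Real.sqrt ((frobNorm ((frobNorm A)⁻¹ • A - (frobNorm A')⁻¹ • A')) ^ 2 +
    ‖lam / (frobNorm A : ℂ) - lam' / (frobNorm A' : ℂ)‖ ^ 2 + dP v v' ^ 2)

/-!
Choose a unitary `U` of `ℂ^n` mapping the line `ℂ v` onto `ℂ v'` with `‖U - 1‖ ≤ θ := d_P(v, v')`:
after multiplying `v'` by a phase so that `⟨v, v'⟩ ≥ 0`, take the rotation in the plane of `v, v'`,
whose distance to the identity is the chord `√(2 - 2 cos θ) ≤ θ`. `U` restricts to an isometry
`e : T_v ≃ T_{v'}` intertwining the orthogonal projections, so `A'_{λ',v'} ∘ e` and `e ∘ A_{λ,v}`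
differ in norm by at most `δ = ‖A - A'‖_F + |λ - λ'| + 4θ`, using `|λ| ≤ ‖A‖_F = 1`. As
`δ ≤ √18 · dist`, the hypothesis gives `μ δ ≤ 0.34 ε < 1`, and the perturbation bounds
`‖B'⁻¹‖ (1 - ‖B⁻¹‖ δ) ≤ ‖B⁻¹‖ ≤ ‖B'⁻¹‖ (1 + ‖B⁻¹‖ δ)` for inverses yield the claim.
-/

namespace ContinuousLinearMap

variable {𝕜 X Y : Type*} [NontriviallyNormedField 𝕜] [CompleteSpace 𝕜]
  [NormedAddCommGroup X] [NormedSpace 𝕜 X] [FiniteDimensional 𝕜 X]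
  [NormedAddCommGroup Y] [NormedSpace 𝕜 Y] [FiniteDimensional 𝕜 Y]

theorem isInvertible_of_bijective {B : X →L[𝕜] X} (hB : Function.Bijective B) :
    B.IsInvertible :=
  ⟨(LinearEquiv.ofBijective (B : X →ₗ[𝕜] X) hB).toContinuousLinearEquiv, rfl⟩

theorem norm_le_norm_inverse_mul_norm_apply {B : X →L[𝕜] X} (hB : Function.Bijective B) (x : X) :
    ‖x‖ ≤ ‖B.inverse‖ * ‖B x‖ := by
  simpa only [(isInvertible_of_bijective hB).inverse_apply_self] using B.inverse.le_opNorm (B x)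

theorem bijective_and_norm_inverse_le {B : X →L[𝕜] X} {C : ℝ} (hC : 0 ≤ C)
    (h : ∀ x, ‖x‖ ≤ C * ‖B x‖) : Function.Bijective B ∧ ‖B.inverse‖ ≤ C := by
  have hinj : Function.Injective B := by
    refine (injective_iff_map_eq_zero B).2 fun x hx => norm_le_zero_iff.1 ?_
    simpa [hx] using h x
  have hB : Function.Bijective B :=
    ⟨hinj, LinearMap.injective_iff_surjective (f := (B : X →ₗ[𝕜] X)) |>.1 hinj⟩
  refine ⟨hB, opNorm_le_bound _ hC fun y => ?_⟩
  simpa only [(isInvertible_of_bijective hB).self_apply_inverse] using h (B.inverse y)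

theorem bijective_and_norm_inverse_bounds_of_perturbation (e : X ≃ₗᵢ[𝕜] Y)
    {B : X →L[𝕜] X} {B' : Y →L[𝕜] Y} (hB : Function.Bijective B) {δ : ℝ} (hδ0 : 0 ≤ δ)
    (hδ : ∀ x, ‖B' (e x) - e (B x)‖ ≤ δ * ‖x‖) (hsmall : ‖B.inverse‖ * δ < 1) :
    Function.Bijective B' ∧ ‖B'.inverse‖ * (1 - ‖B.inverse‖ * δ) ≤ ‖B.inverse‖ ∧
      ‖B.inverse‖ ≤ ‖B'.inverse‖ * (1 + ‖B.inverse‖ * δ) := by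
  set K := ‖B.inverse‖
  have hK : 0 ≤ K := norm_nonneg _
  have hpos : 0 < 1 - K * δ := by linarith
  have hclose : ∀ x, |‖B' (e x)‖ - ‖B x‖| ≤ δ * ‖x‖ := fun x => by
    simpa only [e.norm_map] using (abs_norm_sub_norm_le (B' (e x)) (e (B x))).trans (hδ x)
  have hlower : ∀ y, ‖y‖ ≤ K / (1 - K * δ) * ‖B' y‖ := fun y => by
    obtain ⟨x, rfl⟩ := e.surjective y
    rw [div_mul_eq_mul_div, le_div_iff₀ hpos, e.norm_map]
    nlinarith [norm_le_norm_inverse_mul_norm_apply hB x, (abs_le.1 (hclose x)).1]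
  obtain ⟨hB', hL⟩ := bijective_and_norm_inverse_le (div_nonneg hK hpos.le) hlower
  refine ⟨hB', (le_div_iff₀ hpos).1 hL, ?_⟩
  set L := ‖B'.inverse‖
  refine opNorm_le_bound _ (by positivity) fun y => ?_
  obtain ⟨x, rfl⟩ := hB.2 y
  rw [(isInvertible_of_bijective hB).inverse_apply_self]
  have h1 : ‖x‖ ≤ L * (‖B x‖ + δ * ‖x‖) := by
    have := norm_le_norm_inverse_mul_norm_apply hB' (e x)
    rw [e.norm_map] at this
    exact this.trans (mul_le_mul_of_nonneg_left (by linarith [(abs_le.1 (hclose x)).2])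
      (norm_nonneg _))
  have h2 : ‖x‖ ≤ K * ‖B x‖ := norm_le_norm_inverse_mul_norm_apply hB x
  nlinarith [mul_le_mul_of_nonneg_left h2 (mul_nonneg (norm_nonneg B'.inverse) hδ0)]

end ContinuousLinearMap

open scoped InnerProductSpace

section PlaneRotation

variable {E : Type*} [NormedAddCommGroup E] [InnerProductSpace ℂ E]

/-- For an orthonormal pair `u, w` and `c ^ 2 + s ^ 2 = 1`: the rotation with cosine `c` and sine
`s` in the plane spanned by `u, w`, fixing its orthogonal complement. -/
def planeRotation (u w : E) (c s : ℝ) : E →L[ℂ] E :=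
  ContinuousLinearMap.id ℂ E
    + (((c : ℂ) - 1) • innerSL ℂ u - (s : ℂ) • innerSL ℂ w).smulRight u
    + ((s : ℂ) • innerSL ℂ u + ((c : ℂ) - 1) • innerSL ℂ w).smulRight w

variable {u w : E} {c s : ℝ}

theorem planeRotation_apply_sub_self (x : E) :
    planeRotation u w c s x - x =
      (((c : ℂ) - 1) * ⟪u, x⟫_ℂ - s * ⟪w, x⟫_ℂ) • u
        + (s * ⟪u, x⟫_ℂ + ((c : ℂ) - 1) * ⟪w, x⟫_ℂ) • w := by
  simp only [planeRotation, _root_.add_apply, ContinuousLinearMap.id_apply,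
    ContinuousLinearMap.smulRight_apply, _root_.sub_apply, _root_.smul_apply, innerSL_apply_apply,
    smul_eq_mul]
  abel

theorem re_inner_planeRotation_sub_self (x : E) :
    RCLike.re ⟪x, planeRotation u w c s x - x⟫_ℂ
      = (c - 1) * (‖⟪u, x⟫_ℂ‖ ^ 2 + ‖⟪w, x⟫_ℂ‖ ^ 2) := by
  rw [planeRotation_apply_sub_self, inner_add_right, inner_smul_right, inner_smul_right,
    ← inner_conj_symm u x, ← inner_conj_symm w x]
  simp only [Complex.sq_norm, Complex.normSq_apply, RCLike.re_to_complex, Complex.add_re,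
    Complex.add_im, Complex.mul_re, Complex.mul_im, Complex.sub_re, Complex.sub_im, Complex.conj_re,
    Complex.conj_im, Complex.ofReal_re, Complex.ofReal_im, Complex.one_re, Complex.one_im]
  ring

theorem norm_smul_add_smul_sq_of_orthonormal (hu : ‖u‖ = 1) (hw : ‖w‖ = 1) (huw : ⟪u, w⟫_ℂ = 0)
    (α β : ℂ) :
    ‖α • u + β • w‖ ^ 2 = ‖α‖ ^ 2 + ‖β‖ ^ 2 := by
  rw [norm_add_sq (𝕜 := ℂ), inner_smul_left, inner_smul_right, huw, norm_smul, norm_smul, hu, hw]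
  simp

theorem norm_inner_sq_add_norm_inner_sq_le (hu : ‖u‖ = 1) (hw : ‖w‖ = 1) (huw : ⟪u, w⟫_ℂ = 0)
    (x : E) :
    ‖⟪u, x⟫_ℂ‖ ^ 2 + ‖⟪w, x⟫_ℂ‖ ^ 2 ≤ ‖x‖ ^ 2 := by
  have hON : Orthonormal ℂ ![u, w] := by
    simp [hu, hw, huw, inner_eq_zero_symm.1 huw, Orthonormal, Pairwise]
  simpa [Fin.sum_univ_two] using hON.sum_inner_products_le x (s := Finset.univ)

theorem norm_planeRotation_sub_self_sq (hu : ‖u‖ = 1) (hw : ‖w‖ = 1) (huw : ⟪u, w⟫_ℂ = 0)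
    (hcs : c ^ 2 + s ^ 2 = 1) (x : E) :
    ‖planeRotation u w c s x - x‖ ^ 2 = (2 - 2 * c) * (‖⟪u, x⟫_ℂ‖ ^ 2 + ‖⟪w, x⟫_ℂ‖ ^ 2) := by
  rw [planeRotation_apply_sub_self, norm_smul_add_smul_sq_of_orthonormal hu hw huw]
  simp only [Complex.sq_norm, Complex.normSq_apply, Complex.sub_re, Complex.sub_im,
    Complex.add_re, Complex.add_im, Complex.mul_re, Complex.mul_im, Complex.ofReal_re,
    Complex.ofReal_im, Complex.one_re, Complex.one_im]
  linear_combination ((⟪u, x⟫_ℂ).re ^ 2 + (⟪u, x⟫_ℂ).im ^ 2 + (⟪w, x⟫_ℂ).re ^ 2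
    + (⟪w, x⟫_ℂ).im ^ 2) * hcs

theorem norm_planeRotation_apply (hu : ‖u‖ = 1) (hw : ‖w‖ = 1) (huw : ⟪u, w⟫_ℂ = 0)
    (hcs : c ^ 2 + s ^ 2 = 1) (x : E) :
    ‖planeRotation u w c s x‖ = ‖x‖ := by
  have h := norm_add_sq (𝕜 := ℂ) x (planeRotation u w c s x - x)
  rw [add_sub_cancel, re_inner_planeRotation_sub_self,
    norm_planeRotation_sub_self_sq hu hw huw hcs] at h
  exact (sq_eq_sq₀ (norm_nonneg _) (norm_nonneg _)).1 (by linarith)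

theorem norm_planeRotation_sub_self_le (hu : ‖u‖ = 1) (hw : ‖w‖ = 1) (huw : ⟪u, w⟫_ℂ = 0)
    (hcs : c ^ 2 + s ^ 2 = 1) (x : E) :
    ‖planeRotation u w c s x - x‖ ≤ √(2 - 2 * c) * ‖x‖ := by
  have hc : 0 ≤ 2 - 2 * c := by nlinarith
  rw [← Real.sqrt_sq (norm_nonneg (planeRotation u w c s x - x)), ← Real.sqrt_sq (norm_nonneg x),
    ← Real.sqrt_mul hc]
  gcongr
  rw [norm_planeRotation_sub_self_sq hu hw huw hcs]
  exact mul_le_mul_of_nonneg_left (norm_inner_sq_add_norm_inner_sq_le hu hw huw x) hc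

end PlaneRotation

theorem Real.sqrt_two_sub_two_mul_le_arccos {c : ℝ} (h₀ : -1 ≤ c) (h₁ : c ≤ 1) :
    √(2 - 2 * c) ≤ Real.arccos c := by
  have h := Real.one_sub_sq_div_two_le_cos (x := Real.arccos c)
  rw [Real.cos_arccos h₀ h₁] at h
  rw [← Real.sqrt_sq (Real.arccos_nonneg c)]
  exact Real.sqrt_le_sqrt (by linarith)

section IsometryNearIdentity

variable {E : Type*} [NormedAddCommGroup E] [InnerProductSpace ℂ E] [FiniteDimensional ℂ E]

theorem exists_linearIsometryEquiv_apply_eq_of_inner_eq {u u' : E} (hu : ‖u‖ = 1)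
    (hu' : ‖u'‖ = 1) {c : ℝ} (hc : 0 ≤ c) (huu' : ⟪u, u'⟫_ℂ = c) :
    ∃ U : E ≃ₗᵢ[ℂ] E, U u = u' ∧ ∀ x, ‖U x - x‖ ≤ √(2 - 2 * c) * ‖x‖ := by
  have huu : ⟪u, u⟫_ℂ = 1 := by simp [inner_self_eq_norm_sq_to_K, hu]
  set w₀ := u' - (c : ℂ) • u with hw₀
  have huw₀ : ⟪u, w₀⟫_ℂ = 0 := by simp [w₀, huu', hu]
  have hcs : c ^ 2 + ‖w₀‖ ^ 2 = 1 := by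
    have h := norm_add_sq (𝕜 := ℂ) ((c : ℂ) • u) w₀
    rw [inner_smul_left, huw₀, mul_zero, map_zero, add_sub_cancel, hu', norm_smul, hu] at h
    simpa [Real.norm_eq_abs, sq_abs] using h.symm
  rcases eq_or_ne w₀ 0 with h0 | h0
  · have hc1 : c = 1 := by nlinarith [norm_eq_zero.2 h0]
    refine ⟨LinearIsometryEquiv.refl ℂ E, ?_, fun x => by simp [hc1]⟩
    rw [hw₀, hc1, sub_eq_zero] at h0
    simpa using h0.symm
  set s := ‖w₀‖
  have hs : (s : ℂ) ≠ 0 := by simpa [s] using h0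
  set w := (s : ℂ)⁻¹ • w₀
  have hw : ‖w‖ = 1 := by simp [w, s, norm_smul, h0]
  have huw : ⟪u, w⟫_ℂ = 0 := by simp [w, huw₀]
  let R : E →ₗᵢ[ℂ] E :=
    ⟨(planeRotation u w c s : E →ₗ[ℂ] E), norm_planeRotation_apply hu hw huw hcs⟩
  refine ⟨R.toLinearIsometryEquiv rfl, ?_, norm_planeRotation_sub_self_le hu hw huw hcs⟩
  have h := planeRotation_apply_sub_self (u := u) (w := w) (c := c) (s := s) u
  rw [huu, inner_eq_zero_symm.1 huw, sub_eq_iff_eq_add] at h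
  change planeRotation u w c s u = u'
  rw [h, smul_smul]
  simp only [mul_one, mul_zero, sub_zero, add_zero, mul_inv_cancel₀ hs, one_smul, w₀]
  module

theorem exists_linearIsometryEquiv_span_singleton_eq {v v' : E} (hv : v ≠ 0) (hv' : v' ≠ 0) :
    ∃ U : E ≃ₗᵢ[ℂ] E, ℂ ∙ U v = ℂ ∙ v' ∧
      ∀ x, ‖U x - x‖ ≤ Real.arccos (‖⟪v, v'⟫_ℂ‖ / (‖v‖ * ‖v'‖)) * ‖x‖ := by
  set u := ((‖v‖ : ℂ))⁻¹ • v
  set u₀ := ((‖v'‖ : ℂ))⁻¹ • v'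
  have hu : ‖u‖ = 1 := norm_smul_inv_norm hv
  have hu₀ : ‖u₀‖ = 1 := norm_smul_inv_norm hv'
  obtain ⟨α, hα, hαc⟩ := RCLike.exists_norm_eq_mul_self ⟪u, u₀⟫_ℂ
  set c := ‖⟪u, u₀⟫_ℂ‖
  have hc : c = ‖⟪v, v'⟫_ℂ‖ / (‖v‖ * ‖v'‖) := by
    simp only [c, u, u₀, inner_smul_left, inner_smul_right, norm_mul, norm_inv, map_inv₀,
      Complex.conj_ofReal, Complex.norm_real, norm_norm]
    field_simp
  have hc1 : c ≤ 1 := by simpa [hu, hu₀] using norm_inner_le_norm (𝕜 := ℂ) u u₀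
  obtain ⟨U, hUu, hUx⟩ := exists_linearIsometryEquiv_apply_eq_of_inner_eq hu
    (show ‖α • u₀‖ = 1 by rw [norm_smul, hα, hu₀, one_mul]) (norm_nonneg ⟪u, u₀⟫_ℂ)
    (by rw [inner_smul_right, ← hαc]; rfl)
  refine ⟨U, ?_, fun x => ?_⟩
  · have hUv : U v = ((‖v‖ : ℂ) * α * (‖v'‖ : ℂ)⁻¹) • v' := by
      calc U v = U ((‖v‖ : ℂ) • u) := by simp [u, smul_smul, hv]
        _ = _ := by simp only [map_smul, hUu, u₀, smul_smul, mul_assoc]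
    rw [hUv, Submodule.span_singleton_smul_eq]
    refine IsUnit.mk0 _ (mul_ne_zero (mul_ne_zero ?_ ?_) ?_) <;>
      simp [hv, hv', ← norm_ne_zero_iff, hα]
  · rw [← hc]
    exact (hUx x).trans (mul_le_mul_of_nonneg_right
      (Real.sqrt_two_sub_two_mul_le_arccos (by linarith [norm_nonneg ⟪u, u₀⟫_ℂ]) hc1)
      (norm_nonneg x))

end IsometryNearIdentity

theorem LinearIsometry.norm_apply_map_sub_map_apply_le {R F : Type*} [Semiring R]
    [SeminormedAddCommGroup F] [Module R F] (U : F →ₗᵢ[R] F) (T : F →ₗ[R] F) (T' : F → F)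
    {δ C θ : ℝ} (hT : ∀ z, ‖T' z - T z‖ ≤ δ * ‖z‖) (hC : 0 ≤ C) (hTC : ∀ z, ‖T z‖ ≤ C * ‖z‖)
    (hθ : 0 ≤ θ) (hU : ∀ z, ‖U z - z‖ ≤ θ * ‖z‖) (x : F) :
    ‖T' (U x) - U (T x)‖ ≤ (δ + 2 * C * θ) * ‖x‖ := by
  have hsplit : T' (U x) - U (T x) = (T' (U x) - T (U x)) + T (U x - x) - (U (T x) - T x) := by
    rw [map_sub]; abel
  have h₁ := hT (U x)
  have h₂ : ‖T (U x - x)‖ ≤ C * (θ * ‖x‖) := (hTC _).trans (mul_le_mul_of_nonneg_left (hU x) hC)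
  have h₃ : ‖U (T x) - T x‖ ≤ θ * (C * ‖x‖) := (hU _).trans (mul_le_mul_of_nonneg_left (hTC x) hθ)
  rw [U.norm_map] at h₁
  rw [hsplit]
  linarith [norm_sub_le (T' (U x) - T (U x) + T (U x - x)) (U (T x) - T x),
    norm_add_le (T' (U x) - T (U x)) (T (U x - x))]

section Euclidean

variable {n : ℕ}

open scoped Matrix.Norms.Frobenius

theorem frobNorm_eq_norm (A : Matrix (Fin n) (Fin n) ℂ) : frobNorm A = ‖A‖ := by
  simp only [frobNorm, Matrix.frobenius_norm_def, Real.sqrt_eq_rpow, Real.rpow_two]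

theorem norm_toEuclideanLin_apply_le (A : Matrix (Fin n) (Fin n) ℂ)
    (x : EuclideanSpace ℂ (Fin n)) : ‖Matrix.toEuclideanLin A x‖ ≤ frobNorm A * ‖x‖ := by
  simpa [frobNorm_eq_norm, Matrix.toLpLin_apply, ← Matrix.replicateCol_mulVec]
    using Matrix.frobenius_norm_mul A (Matrix.replicateCol Unit x.ofLp)

theorem frobNorm_nonneg (A : Matrix (Fin n) (Fin n) ℂ) : 0 ≤ frobNorm A :=
  Real.sqrt_nonneg _

theorem norm_le_frobNorm_of_toEuclideanLin_eq_smul {A : Matrix (Fin n) (Fin n) ℂ} {lam : ℂ}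
    {v : EuclideanSpace ℂ (Fin n)} (hv : v ≠ 0) (heig : Matrix.toEuclideanLin A v = lam • v) :
    ‖lam‖ ≤ frobNorm A := by
  have h := norm_toEuclideanLin_apply_le A v
  rw [heig, norm_smul] at h
  exact le_of_mul_le_mul_right h (norm_pos_iff.2 hv)

end Euclidean

section Tv

variable {n : ℕ} {v v' : EuclideanSpace ℂ (Fin n)}

theorem map_Tv_eq {U : EuclideanSpace ℂ (Fin n) ≃ₗᵢ[ℂ] EuclideanSpace ℂ (Fin n)}
    (hU : ℂ ∙ U v = ℂ ∙ v') :
    (Tv v).map (U.toLinearEquiv : EuclideanSpace ℂ (Fin n) →ₗ[ℂ] EuclideanSpace ℂ (Fin n)) =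
      Tv v' := by
  rw [Tv, Submodule.map_orthogonal_equiv, Submodule.map_span, Set.image_singleton]
  exact congrArg Submodule.orthogonal hU

def TvEquiv (U : EuclideanSpace ℂ (Fin n) ≃ₗᵢ[ℂ] EuclideanSpace ℂ (Fin n))
    (hU : ℂ ∙ U v = ℂ ∙ v') : Tv v ≃ₗᵢ[ℂ] Tv v' :=
  (U.submoduleMap (Tv v)).trans (LinearIsometryEquiv.ofEq _ _ (map_Tv_eq hU))

theorem starProjection_Tv_map_apply
    {U : EuclideanSpace ℂ (Fin n) ≃ₗᵢ[ℂ] EuclideanSpace ℂ (Fin n)} (hU : ℂ ∙ U v = ℂ ∙ v')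
    (z : EuclideanSpace ℂ (Fin n)) :
    (Tv v').starProjection (U z) = U ((Tv v).starProjection z) := by
  have h := Submodule.starProjection_map_apply U (Tv v) (U z)
  simp only [map_Tv_eq hU, LinearIsometryEquiv.symm_apply_apply] at h
  exact h

theorem norm_Alv_TvEquiv_sub_TvEquiv_Alv_le (A A' : Matrix (Fin n) (Fin n) ℂ) (lam lam' : ℂ)
    {U : EuclideanSpace ℂ (Fin n) ≃ₗᵢ[ℂ] EuclideanSpace ℂ (Fin n)} (hU : ℂ ∙ U v = ℂ ∙ v')
    {θ : ℝ} (hθ : 0 ≤ θ) (hUθ : ∀ z, ‖U z - z‖ ≤ θ * ‖z‖) (x : Tv v) :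
    ‖Alv A' lam' v' (TvEquiv U hU x) - TvEquiv U hU (Alv A lam v x)‖ ≤
      (frobNorm (A - A') + ‖lam - lam'‖ + 2 * (frobNorm A + ‖lam‖) * θ) * ‖x‖ := by
  set T := Matrix.toEuclideanLin A - lam • LinearMap.id
  set T' := Matrix.toEuclideanLin A' - lam' • LinearMap.id
  have hT : ∀ z, ‖T' z - T z‖ ≤ (frobNorm (A - A') + ‖lam - lam'‖) * ‖z‖ := fun z => by
    have : T' z - T z = -(Matrix.toEuclideanLin (A - A') z - (lam - lam') • z) := by
      simp only [T, T', map_sub, LinearMap.sub_apply, LinearMap.smul_apply, LinearMap.id_apply,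
        sub_smul]
      abel
    rw [this, norm_neg, add_mul]
    refine (norm_sub_le _ _).trans (add_le_add (norm_toEuclideanLin_apply_le _ z) ?_)
    rw [norm_smul]
  have hTC : ∀ z, ‖T z‖ ≤ (frobNorm A + ‖lam‖) * ‖z‖ := fun z => by
    rw [add_mul, ← norm_smul]
    exact (norm_sub_le _ _).trans (add_le_add_left (norm_toEuclideanLin_apply_le A z) _)
  have hproj : ((Alv A' lam' v' (TvEquiv U hU x) - TvEquiv U hU (Alv A lam v x) : Tv v') :
      EuclideanSpace ℂ (Fin n)) = (Tv v').starProjection (T' (U x) - U (T x)) := by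
    rw [map_sub, starProjection_Tv_map_apply hU]
    rfl
  calc ‖Alv A' lam' v' (TvEquiv U hU x) - TvEquiv U hU (Alv A lam v x)‖
      = ‖(Tv v').starProjection (T' (U x) - U (T x))‖ := by rw [← hproj]; rfl
    _ ≤ ‖T' (U x) - U (T x)‖ := (Tv v').norm_starProjection_apply_le _
    _ ≤ _ := U.toLinearIsometry.norm_apply_map_sub_map_apply_le T T' hT
        (add_nonneg (frobNorm_nonneg A) (norm_nonneg lam)) hTC hθ hUθ x

end Tv

/-- Cauchy–Schwarz against `(1, 1, 4)`, and `√18 ≤ 4.25`. -/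
theorem add_add_four_mul_le_sqrt (a b θ : ℝ) :
    a + b + 4 * θ ≤ 4.25 * √(a ^ 2 + b ^ 2 + θ ^ 2) := by
  rw [show (4.25 : ℝ) = √(4.25 ^ 2) by norm_num, ← Real.sqrt_mul (by norm_num)]
  exact (le_abs_self _).trans (Real.abs_le_sqrt (by
    nlinarith [sq_nonneg (a - b), sq_nonneg (4 * a - θ), sq_nonneg (4 * b - θ)]))

theorem le_distT_of_frobNorm_eq_one {n : ℕ} {A A' : Matrix (Fin n) (Fin n) ℂ}
    (hA : frobNorm A = 1) (hA' : frobNorm A' = 1) {lam : ℂ} (hlam : ‖lam‖ ≤ 1) (lam' : ℂ)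
    (v v' : EuclideanSpace ℂ (Fin n)) :
    frobNorm (A - A') + ‖lam - lam'‖ + 2 * (frobNorm A + ‖lam‖) * dP v v' ≤
      4.25 * distT A lam v A' lam' v' := by
  have hdist : distT A lam v A' lam' v' =
      √(frobNorm (A - A') ^ 2 + ‖lam - lam'‖ ^ 2 + dP v v' ^ 2) := by
    simp [distT, hA, hA']
  rw [hdist, hA]
  refine le_trans ?_ (add_add_four_mul_le_sqrt _ _ _)
  have hθ : 0 ≤ dP v v' := Real.arccos_nonneg _
  nlinarith

/-- Theorem (Lipschitz property of `μ` w.r.t. the distance `dist` on triples). -/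
theorem mu_lipschitz {n : ℕ} (A A' : Matrix (Fin n) (Fin n) ℂ)
    (hA : frobNorm A = 1) (hA' : frobNorm A' = 1)
    (v v' : EuclideanSpace ℂ (Fin n)) (hv : v ≠ 0) (hv' : v' ≠ 0)
    (lam lam' : ℂ) (heig : Matrix.toEuclideanLin A v = lam • v)
    (hinv : Function.Bijective (Alv A lam v))
    (ε : ℝ) (hε0 : 0 < ε) (hε1 : ε < 0.37)
    (hcond : mu A lam v * distT A lam v A' lam' v' ≤ ε / 12.5) :
    Function.Bijective (Alv A' lam' v') ∧
      mu A lam v / (1 + ε) ≤ mu A' lam' v' ∧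
      mu A' lam' v' ≤ (1 + ε) * mu A lam v := by
  obtain ⟨U, hU, hUθ⟩ := exists_linearIsometryEquiv_span_singleton_eq hv hv'
  have hlam : ‖lam‖ ≤ 1 := hA ▸ norm_le_frobNorm_of_toEuclideanLin_eq_smul hv heig
  rw [mu, hA, one_mul] at hcond ⊢
  rw [mu, hA', one_mul]
  set K := ‖(AlvC A lam v).inverse‖
  set δ := frobNorm (A - A') + ‖lam - lam'‖ + 2 * (frobNorm A + ‖lam‖) * dP v v'
  have hθ : 0 ≤ dP v v' := Real.arccos_nonneg _
  have hδ0 : 0 ≤ δ := by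
    have := frobNorm_nonneg (A - A')
    positivity
  have hKδ : K * δ ≤ 0.34 * ε := by
    have hδ : δ ≤ 4.25 * distT A lam v A' lam' v' :=
      le_distT_of_frobNorm_eq_one hA hA' hlam lam' v v'
    calc K * δ ≤ 4.25 * (K * distT A lam v A' lam' v') := by
          nlinarith [mul_le_mul_of_nonneg_left hδ (norm_nonneg (AlvC A lam v).inverse)]
      _ ≤ 4.25 * (ε / 12.5) := by gcongr
      _ = 0.34 * ε := by ring
  obtain ⟨hbij, hupper, hlower⟩ :=
    ContinuousLinearMap.bijective_and_norm_inverse_bounds_of_perturbation (TvEquiv U hU)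
      (B := AlvC A lam v) (B' := AlvC A' lam' v') hinv hδ0
      (norm_Alv_TvEquiv_sub_TvEquiv_Alv_le A A' lam lam' hU hθ hUθ) (by linarith)
  have hL := norm_nonneg (AlvC A' lam' v').inverse
  refine ⟨hbij, (div_le_iff₀ (by linarith)).2 (by nlinarith), ?_⟩
  nlinarith [mul_nonneg hL (show 0 ≤ (1 + ε) * (1 - K * δ) - 1 by nlinarith)]

end
end

section
/- Let λ be a simple eigenvalue of A ∈ ℂ^{n×n} with nonzero right eigenvector v (Av = λv) and nonzero left eigenvector u (A*u = conj(λ)·u), so that ⟨v,u⟩ ≠ 0. Then the supremum over all Ȧ ∈ ℂ^{n×n} with ‖Ȧ‖_F = 1 of |⟨Ȧ v, u⟩| / |⟨v, u⟩| equals (‖u‖·‖v‖)/|⟨u,v⟩|. -/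
noncomputable section

open Matrix Set

/-! The map `Ȧ ↦ ⟪Ȧ v, u⟫` is the Frobenius inner product of `Ȧ` with the rank-one matrix `u v*`,
whose Frobenius norm is `‖u‖ ‖v‖`. By Cauchy–Schwarz its supremum over the Frobenius unit sphere is
`‖u‖ ‖v‖`, attained at `Ȧ = u v* / (‖u‖ ‖v‖)`. -/

theorem isGreatest_norm_inner_div {𝕜 E : Type*} [RCLike 𝕜] [NormedAddCommGroup E]
    [InnerProductSpace 𝕜 E] {y : E} (hy : y ≠ 0) {c : ℝ} (hc : 0 ≤ c) :
    IsGreatest {r | ∃ x : E, ‖x‖ = 1 ∧ r = ‖inner 𝕜 x y‖ / c} (‖y‖ / c) := by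
  refine ⟨⟨(‖y‖⁻¹ : 𝕜) • y, ?_, ?_⟩, ?_⟩
  · simp [norm_smul, hy]
  · rw [inner_smul_left, inner_self_eq_norm_sq_to_K, norm_mul, RCLike.norm_conj, norm_inv,
      norm_pow, RCLike.norm_ofReal, abs_norm]
    field_simp
  · rintro r ⟨x, hx, rfl⟩
    gcongr
    simpa [hx] using norm_inner_le_norm (𝕜 := 𝕜) x y

def Matrix.toEuclideanVec {𝕜 m n : Type*} (A : Matrix m n 𝕜) : EuclideanSpace 𝕜 (m × n) :=
  WithLp.toLp 2 fun p => A p.1 p.2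

namespace Matrix

variable {𝕜 m n : Type*}

theorem toEuclideanVec_surjective :
    Function.Surjective (toEuclideanVec : Matrix m n 𝕜 → EuclideanSpace 𝕜 (m × n)) :=
  fun x => ⟨of fun i j => x (i, j), rfl⟩

variable [RCLike 𝕜] [Fintype m] [Fintype n]

theorem norm_toEuclideanVec_vecMulVec (u : EuclideanSpace 𝕜 m) (v : EuclideanSpace 𝕜 n) :
    ‖toEuclideanVec (vecMulVec u.ofLp (star v.ofLp))‖ = ‖u‖ * ‖v‖ := by
  rw [EuclideanSpace.norm_eq, EuclideanSpace.norm_eq, EuclideanSpace.norm_eq,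
    ← Real.sqrt_mul (by positivity), Finset.sum_mul_sum, Fintype.sum_prod_type]
  simp [toEuclideanVec, vecMulVec_apply, mul_pow]

theorem inner_toEuclideanLin_eq_inner_toEuclideanVec [DecidableEq n] (A : Matrix m n 𝕜)
    (v : EuclideanSpace 𝕜 n) (u : EuclideanSpace 𝕜 m) :
    inner 𝕜 (toEuclideanLin A v) u =
      inner 𝕜 (toEuclideanVec A) (toEuclideanVec (vecMulVec u.ofLp (star v.ofLp))) := by
  simp only [PiLp.inner_apply, RCLike.inner_apply, toEuclideanVec, Fintype.sum_prod_type,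
    ofLp_toLpLin, toLin'_apply, mulVec, dotProduct, vecMulVec_apply, Pi.star_apply,
    RCLike.star_def, map_sum, map_mul, Finset.mul_sum]
  refine Finset.sum_congr rfl fun i _ => Finset.sum_congr rfl fun j _ => ?_
  ring

end Matrix

theorem frobNorm_eq_norm_toEuclideanVec {n : ℕ} (A : Matrix (Fin n) (Fin n) ℂ) :
    frobNorm A = ‖A.toEuclideanVec‖ := by
  simp [frobNorm, EuclideanSpace.norm_eq, Matrix.toEuclideanVec, Fintype.sum_prod_type]

theorem isGreatest_norm_inner_toEuclideanLin_div {n : ℕ} {v u : EuclideanSpace ℂ (Fin n)}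
    (hv : v ≠ 0) (hu : u ≠ 0) {c : ℝ} (hc : 0 ≤ c) :
    IsGreatest {r : ℝ | ∃ Adot : Matrix (Fin n) (Fin n) ℂ, frobNorm Adot = 1 ∧
        r = ‖(inner ℂ (Matrix.toEuclideanLin Adot v) u : ℂ)‖ / c} (‖u‖ * ‖v‖ / c) := by
  have hy : Matrix.toEuclideanVec (Matrix.vecMulVec u.ofLp (star v.ofLp)) ≠ 0 := by
    rw [← norm_ne_zero_iff, Matrix.norm_toEuclideanVec_vecMulVec]
    exact mul_ne_zero (norm_ne_zero_iff.mpr hu) (norm_ne_zero_iff.mpr hv)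
  convert isGreatest_norm_inner_div (𝕜 := ℂ) hy hc using 1
  · ext r
    rw [Set.mem_ofPred_eq, Set.mem_ofPred_eq, Matrix.toEuclideanVec_surjective.exists]
    simp only [frobNorm_eq_norm_toEuclideanVec,
      Matrix.inner_toEuclideanLin_eq_inner_toEuclideanVec]
  · rw [Matrix.norm_toEuclideanVec_vecMulVec]

theorem eigenvalue_condition_eq_general {n : ℕ}
    (v u : EuclideanSpace ℂ (Fin n)) (hv : v ≠ 0) (hu : u ≠ 0) :
    sSup {r : ℝ | ∃ Adot : Matrix (Fin n) (Fin n) ℂ, frobNorm Adot = 1 ∧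
        r = ‖(inner ℂ (Matrix.toEuclideanLin Adot v) u : ℂ)‖ / ‖(inner ℂ v u : ℂ)‖} =
      ‖u‖ * ‖v‖ / ‖(inner ℂ u v : ℂ)‖ := by
  rw [norm_inner_symm u v]
  exact (isGreatest_norm_inner_toEuclideanLin_div hv hu (norm_nonneg _)).csSup_eq

/-- Proposition: the eigenvalue condition number equals `‖u‖‖v‖/|⟨u,v⟩|`. -/
theorem eigenvalue_condition_eq {n : ℕ} (A : Matrix (Fin n) (Fin n) ℂ) (lam : ℂ)
    (hsimple : (Matrix.charpoly A).rootMultiplicity lam = 1)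
    (v u : EuclideanSpace ℂ (Fin n)) (hv : v ≠ 0) (hu : u ≠ 0)
    (heig : Matrix.toEuclideanLin A v = lam • v)
    (hleft : Matrix.toEuclideanLin Aᴴ u = (starRingEnd ℂ) lam • u) :
    sSup {r : ℝ | ∃ Adot : Matrix (Fin n) (Fin n) ℂ, frobNorm Adot = 1 ∧
        r = ‖(inner ℂ (Matrix.toEuclideanLin Adot v) u : ℂ)‖ / ‖(inner ℂ v u : ℂ)‖} =
      ‖u‖ * ‖v‖ / ‖(inner ℂ u v : ℂ)‖ :=
  eigenvalue_condition_eq_general v u hv hu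

end
end
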